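/- For n, t ∈ ℕ with n > t and x ∈ I_t \ I_{t+1}, the 2^n-th Fejér kernel satisfies: K_{2^n}(x) = 2^{t−1} if x ∈ I_n(e_t), K_{2^n}(x) = (2^n + 1)/2 if x ∈ I_n, and K_{2^n}(x) = 0 otherwise. -/

import Mathlib

/-!
Since `w_{2^n + j} = r_n w_j` for `j < 2^n`, we get `D_{2^n + k} = D_{2^n} + r_n D_k` for
`k ≤ 2^n`, hence `D_{2^n} = ∏_{k<n} (1 + r_k)` and the recursion
`K_{2^{n+1}} = (D_{2^n} + (1 + r_n) K_{2^n}) / 2`. For `x ∈ I_t \ I_{t+1}` we have `r_k(x) = 1`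
for `k < t` and `r_t(x) = -1`, so `D_{2^t}(x) = 2^t` and `D_{2^m}(x) = 0` for `m > t`. Thus
`K_{2^{t+1}}(x) = 2^{t-1}`, and from then on each step multiplies by `(1 + r_m(x)) / 2`, which is
`1` or `0` according as `x_m = 0` or `x_m = 1`. The case `x ∈ I_n` does not occur, as `x_t = 1`.
-/

open MeasureTheory Filter Finset
open scoped ENNReal NNReal

noncomputable section

/-- The dyadic group `G = ∏ Z₂`. -/
abbrev G : Type := ℕ → ZMod 2

instance : TopologicalSpace (ZMod 2) := ⊥
instance : DiscreteTopology (ZMod 2) := ⟨rfl⟩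
instance : MeasurableSpace (ZMod 2) := ⊤
instance : BorelSpace (ZMod 2) := ⟨borel_eq_top_of_discrete.symm⟩
instance : ContinuousAdd (ZMod 2) := ⟨continuous_of_discreteTopology⟩
instance : ContinuousNeg (ZMod 2) := ⟨continuous_of_discreteTopology⟩
instance : IsTopologicalAddGroup (ZMod 2) := ⟨⟩

/-- The normalized Haar measure `μ` on the dyadic group `G`. -/
def μG : Measure G := Measure.addHaarMeasure ⊤

/-- The Rademacher functions `r_k(x) = (-1)^{x_k}`. -/
def rad (k : ℕ) (x : G) : ℝ := (-1 : ℝ) ^ (x k).val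

/-- The Walsh functions `w_n = ∏_k r_k^{n_k}`, where `n = ∑ n_k 2^k`. -/
def walsh (n : ℕ) (x : G) : ℝ := ∏ k ∈ Finset.range n, rad k x ^ (Nat.testBit n k).toNat

/-- The Dirichlet kernels `D_n = ∑_{k=0}^{n-1} w_k`. -/
def dirichlet (n : ℕ) (x : G) : ℝ := ∑ k ∈ Finset.range n, walsh k x

/-- The Fejér kernels `K_n = (1/n) ∑_{k=1}^{n} D_k`. -/
def fejer (n : ℕ) (x : G) : ℝ := (n : ℝ)⁻¹ * ∑ k ∈ Finset.Icc 1 n, dirichlet k x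

/-- The Cesàro numbers `A_n^α = ((α+1)⋯(α+n))/n!`. -/
def cesA (α : ℝ) (n : ℕ) : ℝ := (∏ i ∈ Finset.range n, (α + i + 1)) / n.factorial

/-- The `(C,α)` kernels `K_n^α = (1/A_n^α) ∑_{k=1}^n A_{n-k}^{α-1} D_k`. -/
def cesKernel (α : ℝ) (n : ℕ) (x : G) : ℝ :=
  (cesA α n)⁻¹ * ∑ k ∈ Finset.Icc 1 n, cesA (α - 1) (n - k) * dirichlet k x

/-- Walsh–Fourier coefficients of an integrable function. -/
def walshCoeff (f : G → ℝ) (k : ℕ) : ℝ := ∫ x, f x * walsh k x ∂μG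

/-- Partial sums `S_m f` of the Walsh–Fourier series. -/
def partialSum (f : G → ℝ) (m : ℕ) (x : G) : ℝ :=
  ∑ k ∈ Finset.range m, walshCoeff f k * walsh k x

/-- The `(C,α)` means `σ_n^α f = (1/A_n^α) ∑_{k=1}^n A_{n-k}^{α-1} S_k f`. -/
def cesaroMean (α : ℝ) (f : G → ℝ) (n : ℕ) (x : G) : ℝ :=
  (cesA α n)⁻¹ * ∑ k ∈ Finset.Icc 1 n, cesA (α - 1) (n - k) * partialSum f k x

/-- The dyadic interval `I_n(x)`. -/
def dyadicI (n : ℕ) (x : G) : Set G := {y | ∀ i < n, y i = x i}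

/-- `e_k ∈ G`: the element whose `k`-th coordinate is `1` and all others `0`. -/
def eG (k : ℕ) : G := fun i => if i = k then 1 else 0

/-- The projection onto the first `n` coordinates. -/
def projG (n : ℕ) : G → (Fin n → ZMod 2) := fun x i => x i

/-- The dyadic filtration `ℱ_n`, generated by the dyadic intervals of length `n`. -/
def dyadicF : Filtration ℕ (inferInstance : MeasurableSpace G) where
  seq n := MeasurableSpace.comap (projG n) inferInstance
  mono' := by
    intro n m hnm
    have h : projG n = (fun (y : Fin m → ZMod 2) (i : Fin n) => y (Fin.castLE hnm i)) ∘ projG m :=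
      rfl
    simp only []
    rw [h, ← MeasurableSpace.comap_comp]
    exact MeasurableSpace.comap_mono
      ((measurable_pi_lambda _ fun i => measurable_pi_apply _).comap_le)
  le' := fun n => (measurable_pi_lambda _ fun i => measurable_pi_apply _).comap_le

/-- The Walsh–Fourier coefficients `F̂(k) = lim_n ∫ F_n w_k dμ` of a martingale. -/
def martCoeff (F : ℕ → G → ℝ) (k : ℕ) : ℝ :=
  limUnder atTop (fun n => ∫ x, F n x * walsh k x ∂μG)

/-- Partial sums `S_m F` of the Walsh–Fourier series of a martingale. -/
def martSum (F : ℕ → G → ℝ) (m : ℕ) (x : G) : ℝ :=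
  ∑ k ∈ Finset.range m, martCoeff F k * walsh k x

/-- The `(C,α)` means of a martingale. -/
def martCesaro (α : ℝ) (F : ℕ → G → ℝ) (n : ℕ) (x : G) : ℝ :=
  (cesA α n)⁻¹ * ∑ k ∈ Finset.Icc 1 n, cesA (α - 1) (n - k) * martSum F k x

/-- The `L_p(G)` quasi-norm `(∫ |f|^p dμ)^{1/p}`, valued in `ℝ≥0∞`. -/
def LpNormG (p : ℝ) (f : G → ℝ) : ℝ≥0∞ :=
  (∫⁻ x, ENNReal.ofReal |f x| ^ p ∂μG) ^ (1 / p)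

/-- The Hardy space quasi-norm `‖F‖_{H_p} = ‖sup_n |F_n|‖_p` of a martingale. -/
def hardyNorm (p : ℝ) (F : ℕ → G → ℝ) : ℝ≥0∞ :=
  (∫⁻ x, (⨆ n, ENNReal.ofReal |F n x|) ^ p ∂μG) ^ (1 / p)

/-- The Hardy quasi-norm of an integrable function, via its generated martingale `(E_n f)`. -/
def hardyFnNorm (p : ℝ) (f : G → ℝ) : ℝ≥0∞ :=
  hardyNorm p (fun n => μG[f | dyadicF n])

lemma rad_of_eq_zero {k : ℕ} {x : G} (h : x k = 0) : rad k x = 1 := by simp [rad, h]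

lemma rad_of_eq_one {k : ℕ} {x : G} (h : x k = 1) : rad k x = -1 := by
  simp [rad, h, ZMod.val_one]

lemma walsh_eq_prod_range {m N : ℕ} (h : m < 2 ^ N) (x : G) :
    walsh m x = ∏ k ∈ range N, rad k x ^ (m.testBit k).toNat := by
  have extend : ∀ {A B}, A ≤ B → m < 2 ^ A →
      ∏ k ∈ range A, rad k x ^ (m.testBit k).toNat
        = ∏ k ∈ range B, rad k x ^ (m.testBit k).toNat := fun hAB hm =>
    prod_subset (range_subset_range.2 hAB) fun k _ hk => by
      rw [Nat.testBit_lt_two_pow (hm.trans_le (Nat.pow_le_pow_right two_pos (by simpa using hk)))]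
      simp
  rcases le_total m N with hmN | hNm
  · exact extend hmN m.lt_two_pow_self
  · exact (extend hNm h).symm

lemma walsh_two_pow_add {n j : ℕ} (hj : j < 2 ^ n) (x : G) :
    walsh (2 ^ n + j) x = rad n x * walsh j x := by
  rw [walsh_eq_prod_range (N := n + 1) (by rw [pow_succ]; omega), walsh_eq_prod_range hj,
    prod_range_succ, Nat.testBit_two_pow_add_eq, Nat.testBit_lt_two_pow hj, mul_comm]
  congr 1
  · simp
  · exact prod_congr rfl fun k hk => by rw [Nat.testBit_two_pow_add_gt (mem_range.1 hk)]

lemma dirichlet_two_pow_add {n k : ℕ} (hk : k ≤ 2 ^ n) (x : G) :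
    dirichlet (2 ^ n + k) x = dirichlet (2 ^ n) x + rad n x * dirichlet k x := by
  rw [dirichlet, sum_range_add, dirichlet, dirichlet, mul_sum]
  congr 1
  exact sum_congr rfl fun j hj => walsh_two_pow_add ((mem_range.1 hj).trans_le hk) x

lemma dirichlet_two_pow (n : ℕ) (x : G) :
    dirichlet (2 ^ n) x = ∏ k ∈ range n, (1 + rad k x) := by
  induction n with
  | zero => simp [dirichlet, walsh]
  | succ n ih => rw [pow_succ, mul_two, dirichlet_two_pow_add le_rfl, prod_range_succ, ← ih]; ring

lemma sum_Icc_one_add_self {M : Type*} [AddCommMonoid M] (f : ℕ → M) (N : ℕ) :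
    ∑ k ∈ Icc 1 (N + N), f k = ∑ k ∈ Icc 1 N, f k + ∑ k ∈ Icc 1 N, f (N + k) := by
  rw [← zero_add 1, Icc_add_one_left_eq_Ioc, Icc_add_one_left_eq_Ioc,
    ← sum_Ioc_consecutive f N.zero_le (N.le_add_right N)]
  congr 1
  have hmap := map_add_left_Ioc 0 N N
  rw [add_zero] at hmap
  rw [← hmap, sum_map]
  rfl

lemma fejer_two_pow_succ (n : ℕ) (x : G) :
    fejer (2 ^ (n + 1)) x = (dirichlet (2 ^ n) x + (1 + rad n x) * fejer (2 ^ n) x) / 2 := by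
  have hsum : ∑ k ∈ Icc 1 (2 ^ n), dirichlet (2 ^ n + k) x
      = 2 ^ n * dirichlet (2 ^ n) x + rad n x * ∑ k ∈ Icc 1 (2 ^ n), dirichlet k x := by
    rw [sum_congr rfl fun k hk => dirichlet_two_pow_add (mem_Icc.1 hk).2 x, sum_add_distrib,
      sum_const, Nat.card_Icc, mul_sum, nsmul_eq_mul]
    push_cast
    ring
  rw [fejer, fejer, pow_succ, mul_two, sum_Icc_one_add_self, hsum]
  field_simp
  push_cast
  ring

lemma eq_one_of_mem_dyadicI_diff {t : ℕ} {x : G} (hx : x ∈ dyadicI t 0 \ dyadicI (t + 1) 0) :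
    x t = 1 := by
  -- `ZMod 2` is `Fin 2` by definition.
  refine Fin.eq_one_of_ne_zero _ fun hxt => hx.2 fun i hi => ?_
  rcases Nat.lt_succ_iff_lt_or_eq.1 hi with hi | rfl
  exacts [hx.1 i hi, hxt]

lemma fejer_two_pow_eq_prod_Ico {t m : ℕ} (htm : t < m) {x : G}
    (hx : x ∈ dyadicI t 0 \ dyadicI (t + 1) 0) :
    fejer (2 ^ m) x = 2 ^ t / 2 * ∏ k ∈ Ico (t + 1) m, (1 + rad k x) / 2 := by
  have hrad_t : 1 + rad t x = 0 := by rw [rad_of_eq_one (eq_one_of_mem_dyadicI_diff hx)]; ring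
  induction m, htm using Nat.le_induction with
  | base =>
    have hD : dirichlet (2 ^ t) x = 2 ^ t := by
      rw [dirichlet_two_pow, prod_congr rfl fun k hk => by
        rw [rad_of_eq_zero (hx.1 k (mem_range.1 hk))], prod_const, card_range]
      norm_num
    rw [fejer_two_pow_succ, hD, hrad_t, Ico_self, prod_empty]
    ring
  | succ m htm ih =>
    have hD : dirichlet (2 ^ m) x = 0 := by
      rw [dirichlet_two_pow]; exact prod_eq_zero (mem_range.2 htm) hrad_t
    rw [fejer_two_pow_succ, hD, ih, prod_Ico_succ_top htm]
    ring

lemma exists_eq_one_of_notMem_dyadicI_eG {n t : ℕ} {x : G}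
    (hx : x ∈ dyadicI t 0 \ dyadicI (t + 1) 0) (hxe : x ∉ dyadicI n (eG t)) :
    ∃ k ∈ Ico (t + 1) n, x k = 1 := by
  obtain ⟨k, hkn, hxk⟩ : ∃ k < n, x k ≠ eG t k := by simpa [dyadicI] using hxe
  have htk : t < k := by
    by_contra! hkt
    rcases hkt.lt_or_eq with hkt | rfl
    · exact hxk (by simpa [eG, hkt.ne] using hx.1 k hkt)
    · exact hxk (by simpa [eG] using eq_one_of_mem_dyadicI_diff hx)
  have hxk0 : x k ≠ 0 := by simpa [eG, htk.ne'] using hxk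
  exact ⟨k, mem_Ico.2 ⟨htk, hkn⟩, Fin.eq_one_of_ne_zero _ hxk0⟩

/-- explicit formula for the Fejér kernel `K_{2^n}` on `I_t \ I_{t+1}` (`n > t`). -/
theorem statement6 (n t : ℕ) (hnt : t < n) (x : G)
    (hx : x ∈ dyadicI t 0 \ dyadicI (t + 1) 0) :
    (x ∈ dyadicI n (eG t) → fejer (2 ^ n) x = (2 : ℝ) ^ t / 2) ∧
    (x ∈ dyadicI n 0 → fejer (2 ^ n) x = ((2 : ℝ) ^ n + 1) / 2) ∧
    (x ∉ dyadicI n (eG t) → x ∉ dyadicI n 0 → fejer (2 ^ n) x = 0) := by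
  have hxt := eq_one_of_mem_dyadicI_diff hx
  rw [fejer_two_pow_eq_prod_Ico hnt hx]
  refine ⟨fun hxe => ?_, fun hx0 => absurd (hxt ▸ hx0 t hnt) one_ne_zero, fun hxe _ => ?_⟩
  · rw [prod_eq_one, mul_one]
    intro k hk
    rw [rad_of_eq_zero ((hxe k (mem_Ico.1 hk).2).trans (if_neg (by grind)))]
    norm_num
  · obtain ⟨k, hk, hxk⟩ := exists_eq_one_of_notMem_dyadicI_eG hx hxe
    rw [prod_eq_zero hk (by rw [rad_of_eq_one hxk]; ring), mul_zero]
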